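/- arXiv:2503.07023 — 2 statements merged into one kernel-verified Lean document; each statement's English description precedes it below -/
import Mathlib

section
/- If ω is a weight function, then for all ξ > 0 and all j, k ∈ ℕ, the associated sequences satisfy W^{[ξ]}_{j+k} ≤ W^{[2ξ]}_j · W^{[2ξ]}_k, where W^{[ξ]}_k := exp((1/ξ)·φ*(ξk)) and φ* is the Young conjugate of φ = ω ∘ exp. -/
open Real Filter Set

/-- The Young conjugate of `phi = w ∘ exp`. -/
noncomputable def youngStar (w : ℝ → ℝ) (t : ℝ) : ℝ :=
  sSup ((fun s => s * t - w (Real.exp s)) '' Set.Ici (0:ℝ))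

/-- The associated weight sequences. -/
noncomputable def Wseq (w : ℝ → ℝ) (xi : ℝ) (k : ℕ) : ℝ :=
  Real.exp ((1/xi) * youngStar w (xi * k))

/-- `w` is a weight function: continuous, increasing on `[0,∞)`, nonnegative, `w 0 = 0`,
`w (2 t) = O(w t)`, `log t = o(w t)`, and `w ∘ exp` convex on `[0,∞)`. -/
structure IsWeightFunction (w : ℝ → ℝ) : Prop where
  cont : ContinuousOn w (Set.Ici 0)
  mono : MonotoneOn w (Set.Ici 0)
  zero : w 0 = 0
  nonneg : ∀ t, 0 ≤ t → 0 ≤ w t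
  growth : ∃ C > (0:ℝ), ∃ T : ℝ, ∀ t ≥ T, w (2*t) ≤ C * w t
  log_small : ∀ e > (0:ℝ), ∃ T : ℝ, ∀ t ≥ T, Real.log t ≤ e * w t
  convexOn : ConvexOn ℝ (Set.Ici 0) (fun s => w (Real.exp s))


lemma youngStar_bddAbove (w : ℝ → ℝ) (hw : IsWeightFunction w) (t : ℝ) (ht : 0 ≤ t) :
    BddAbove ((fun s => s * t - w (Real.exp s)) '' Set.Ici (0:ℝ)) := by
  obtain ⟨T, hT⟩ := hw.log_small (1/(2*t+1)) (by positivity)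
  set S0 : ℝ := max 0 (Real.log (max T 1)) with hS0
  refine ⟨S0 * t, ?_⟩
  rintro x ⟨s, hs, rfl⟩
  simp only [Set.mem_Ici] at hs
  show s * t - w (Real.exp s) ≤ S0 * t
  have hphi : 0 ≤ w (Real.exp s) := hw.nonneg _ (Real.exp_pos s).le
  by_cases hcase : s ≤ S0
  · have : s * t ≤ S0 * t := mul_le_mul_of_nonneg_right hcase ht
    linarith
  · push_neg at hcase
    have hsS : Real.log (max T 1) ≤ s := le_of_lt (lt_of_le_of_lt (le_max_right _ _) hcase)
    have hexp : T ≤ Real.exp s := by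
      calc T ≤ max T 1 := le_max_left _ _
        _ = Real.exp (Real.log (max T 1)) := by
            rw [Real.exp_log (lt_of_lt_of_le one_pos (le_max_right _ _))]
        _ ≤ Real.exp s := Real.exp_le_exp.mpr hsS
    have := hT _ hexp
    rw [Real.log_exp] at this
    have hs2 : (2*t+1) * s ≤ w (Real.exp s) := by
      rw [div_mul_eq_mul_div, le_div_iff₀ (by positivity)] at this
      linarith
    have hS0nn : 0 ≤ S0 := le_max_left _ _
    nlinarith

lemma le_youngStar (w : ℝ → ℝ) (hw : IsWeightFunction w) (t : ℝ) (ht : 0 ≤ t)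
    (s : ℝ) (hs : 0 ≤ s) : s * t - w (Real.exp s) ≤ youngStar w t :=
  le_csSup (youngStar_bddAbove w hw t ht) ⟨s, hs, rfl⟩

theorem stmt3 (w : ℝ → ℝ) (hw : IsWeightFunction w) :
    ∀ (xi : ℝ), 0 < xi → ∀ j k : ℕ,
      Wseq w xi (j+k) ≤ Wseq w (2*xi) j * Wseq w (2*xi) k := by
  intro xi hxi j k
  have key : youngStar w (xi * ((j:ℝ) + k)) ≤
      (youngStar w (2*xi*j) + youngStar w (2*xi*k)) / 2 := by
    refine csSup_le ⟨_, Set.mem_image_of_mem _ Set.self_mem_Ici⟩ ?_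
    rintro x ⟨s, hs, rfl⟩
    simp only [Set.mem_Ici] at hs
    have h1 := le_youngStar w hw (2*xi*j) (by positivity) s hs
    have h2 := le_youngStar w hw (2*xi*k) (by positivity) s hs
    have : s * (xi * ((j:ℝ) + k)) - w (Real.exp s) =
        ((s * (2*xi*j) - w (Real.exp s)) + (s * (2*xi*k) - w (Real.exp s))) / 2 := by ring
    linarith
  unfold Wseq
  rw [← Real.exp_add]
  apply Real.exp_le_exp.mpr
  push_cast
  have h := mul_le_mul_of_nonneg_left key (le_of_lt (one_div_pos.mpr hxi))
  have heq : 1/(2*xi) = (1/xi)/2 := by rw [div_div, mul_comm]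
  rw [heq]
  linarith
end

section
/- Let ω be a concave weight function (hence subadditive: ω(s+t) ≤ ω(s) + ω(t)). Then for each ξ > 0 the sequences w^{[ξ]}_k := W^{[ξ]}_k / k! satisfy w^{[ξ]}_j · w^{[ξ]}_k ≤ w^{[ξ]}_{j+k} for all j, k ∈ ℕ, where W^{[ξ]}_k := exp((1/ξ)·φ*(ξk)) and φ* is the Young conjugate of φ = ω ∘ exp. -/
open Real Filter Set

lemma young_nonempty (w : ℝ → ℝ) (t : ℝ) :
    ((fun s => s * t - w (Real.exp s)) '' Set.Ici (0:ℝ)).Nonempty :=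
  ⟨_, ⟨0, Set.self_mem_Ici, rfl⟩⟩

lemma young_bdd (w : ℝ → ℝ) (hw : IsWeightFunction w) {t : ℝ} (ht : 0 ≤ t) :
    BddAbove ((fun s => s * t - w (Real.exp s)) '' Set.Ici (0:ℝ)) := by
  obtain ⟨T, hT⟩ := hw.log_small (1/(t+1)) (by positivity)
  refine ⟨(max 0 T) * t, ?_⟩
  rintro x ⟨s, hs, rfl⟩
  simp only [Set.mem_Ici] at hs
  show s * t - w (Real.exp s) ≤ _
  set S := max 0 T with hSdef
  have hS0 : (0:ℝ) ≤ S := le_max_left _ _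
  by_cases h : s ≤ S
  · have h1 : 0 ≤ w (Real.exp s) := hw.nonneg _ (Real.exp_pos s).le
    nlinarith
  · push_neg at h
    have hTS : T ≤ S := le_max_right _ _
    have hes : T ≤ Real.exp s := by
      have h2 := Real.add_one_le_exp s
      linarith
    have h2 := hT _ hes
    rw [Real.log_exp] at h2
    have ht1 : (0:ℝ) < t + 1 := by linarith
    have hwge : (t+1) * s ≤ w (Real.exp s) := by
      rw [one_div] at h2
      calc (t+1)*s ≤ (t+1) * ((t+1)⁻¹ * w (Real.exp s)) :=
            mul_le_mul_of_nonneg_left h2 ht1.le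
        _ = w (Real.exp s) := by field_simp
    nlinarith

lemma young_superadd (w : ℝ → ℝ) (hw : IsWeightFunction w)
    (hsubadd : ∀ s t : ℝ, 0 ≤ s → 0 ≤ t → w (s + t) ≤ w s + w t)
    {xi : ℝ} (hxi : 0 < xi) (j k : ℕ) :
    youngStar w (xi * j) + youngStar w (xi * k) + xi * Real.log ((j+k).choose j) ≤
      youngStar w (xi * ((j:ℝ) + (k:ℝ))) := by
  have hbdd : BddAbove ((fun s => s * (xi * ((j:ℝ)+(k:ℝ))) - w (Real.exp s)) '' Set.Ici (0:ℝ)) :=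
    young_bdd w hw (by positivity)
  have hC1 : (1:ℝ) ≤ ((j+k).choose j : ℝ) := by
    exact_mod_cast Nat.choose_pos (Nat.le_add_right j k)
  have key : ∀ s ∈ Set.Ici (0:ℝ), ∀ s' ∈ Set.Ici (0:ℝ),
      (s * (xi * j) - w (Real.exp s)) + (s' * (xi * k) - w (Real.exp s')) +
        xi * Real.log ((j+k).choose j) ≤ youngStar w (xi * ((j:ℝ) + (k:ℝ))) := by
    intro s hs s' hs'
    simp only [Set.mem_Ici] at hs hs'
    have ha : (0:ℝ) < Real.exp s := Real.exp_pos s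
    have hb : (0:ℝ) < Real.exp s' := Real.exp_pos s'
    have ha1 : (1:ℝ) ≤ Real.exp s := Real.one_le_exp hs
    have hab : (1:ℝ) ≤ Real.exp s + Real.exp s' := by linarith
    set u := Real.log (Real.exp s + Real.exp s') with hu
    have hu0 : 0 ≤ u := Real.log_nonneg hab
    have heu : Real.exp u = Real.exp s + Real.exp s' := Real.exp_log (by linarith)
    have hle : u * (xi * ((j:ℝ)+(k:ℝ))) - w (Real.exp u) ≤ youngStar w (xi * ((j:ℝ) + (k:ℝ))) :=
      le_csSup hbdd ⟨u, hu0, rfl⟩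
    have hbin : ((j+k).choose j : ℝ) * Real.exp s ^ j * Real.exp s' ^ k
        ≤ (Real.exp s + Real.exp s') ^ (j+k) := by
      rw [add_pow]
      have hj : j ∈ Finset.range (j+k+1) := Finset.mem_range.mpr (by omega)
      have h3 := Finset.single_le_sum
        (f := fun i => Real.exp s ^ i * Real.exp s' ^ (j+k-i) * ((j+k).choose i : ℝ))
        (fun i _ => by positivity) hj
      have hjk : j + k - j = k := by omega
      rw [hjk] at h3
      calc ((j+k).choose j : ℝ) * Real.exp s ^ j * Real.exp s' ^ k
          = Real.exp s ^ j * Real.exp s' ^ k * ((j+k).choose j : ℝ) := by ring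
        _ ≤ _ := h3
    have h1 := Real.log_le_log (by positivity) hbin
    rw [Real.log_mul (by positivity) (by positivity),
        Real.log_mul (by positivity) (by positivity),
        Real.log_pow, Real.log_pow, Real.log_pow,
        Real.log_exp, Real.log_exp, ← hu] at h1
    push_cast at h1
    -- h1 : log C + j*s + k*s' ≤ (j+k) * u
    have hsub : w (Real.exp u) ≤ w (Real.exp s) + w (Real.exp s') := by
      rw [heu]; exact hsubadd _ _ ha.le hb.le
    have h4 := mul_le_mul_of_nonneg_left h1 hxi.le
    nlinarith [h4, hle, hsub]
  have h2 : youngStar w (xi * j) ≤ youngStar w (xi * ((j:ℝ) + (k:ℝ)))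
      - xi * Real.log ((j+k).choose j) - youngStar w (xi * k) := by
    rw [show youngStar w (xi * j) = sSup ((fun s => s * (xi * j) - w (Real.exp s)) '' Set.Ici (0:ℝ)) from rfl]
    apply csSup_le (young_nonempty w _)
    rintro x ⟨s, hs, rfl⟩
    have h3 : youngStar w (xi * k) ≤ youngStar w (xi * ((j:ℝ) + (k:ℝ)))
        - xi * Real.log ((j+k).choose j) - (s * (xi * j) - w (Real.exp s)) := by
      rw [show youngStar w (xi * k) = sSup ((fun s => s * (xi * k) - w (Real.exp s)) '' Set.Ici (0:ℝ)) from rfl]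
      apply csSup_le (young_nonempty w _)
      rintro y ⟨s', hs', rfl⟩
      have := key s hs s' hs'
      simp only at this ⊢
      linarith
    simp only
    linarith
  linarith

theorem stmt4 (w : ℝ → ℝ) (hw : IsWeightFunction w)
    (hconc : ConcaveOn ℝ (Set.Ici 0) w)
    (hsubadd : ∀ s t : ℝ, 0 ≤ s → 0 ≤ t → w (s + t) ≤ w s + w t) :
    ∀ (xi : ℝ), 0 < xi → ∀ j k : ℕ,
      (Wseq w xi j / (Nat.factorial j : ℝ)) * (Wseq w xi k / (Nat.factorial k : ℝ)) ≤
        Wseq w xi (j+k) / (Nat.factorial (j+k) : ℝ) := by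
  intro xi hxi j k
  have hkey := young_superadd w hw hsubadd hxi j k
  have hC1 : (1:ℝ) ≤ ((j+k).choose j : ℝ) := by
    exact_mod_cast Nat.choose_pos (Nat.le_add_right j k)
  have hC0 : (0:ℝ) < ((j+k).choose j : ℝ) := lt_of_lt_of_le one_pos hC1
  have hfac : ((j+k).factorial : ℝ) = ((j+k).choose j : ℝ) * (j.factorial : ℝ) * (k.factorial : ℝ) := by
    rw [← Nat.cast_mul, ← Nat.cast_mul]
    congr 1
    have := Nat.choose_mul_factorial_mul_factorial (Nat.le_add_right j k)
    rw [Nat.add_sub_cancel_left] at this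
    omega
  have hcast : xi * (((j:ℝ)) + (k:ℝ)) = xi * ((j+k : ℕ) : ℝ) := by push_cast; ring
  rw [hcast] at hkey
  have hmain : Wseq w xi j * Wseq w xi k * ((j+k).choose j : ℝ) ≤ Wseq w xi (j+k) := by
    rw [Wseq, Wseq, Wseq, ← Real.exp_log hC0, ← Real.exp_add, ← Real.exp_add]
    apply Real.exp_le_exp.mpr
    have h4 := mul_le_mul_of_nonneg_left hkey (le_of_lt (one_div_pos.mpr hxi))
    have hx : (1/xi) * (xi * Real.log ((j+k).choose j : ℝ)) = Real.log ((j+k).choose j : ℝ) := by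
      field_simp
    nlinarith [h4]
  rw [div_mul_div_comm, div_le_div_iff₀ (by positivity) (by positivity), hfac]
  calc Wseq w xi j * Wseq w xi k * (((j+k).choose j : ℝ) * (j.factorial : ℝ) * (k.factorial : ℝ))
      = (Wseq w xi j * Wseq w xi k * ((j+k).choose j : ℝ)) * ((j.factorial : ℝ) * (k.factorial : ℝ)) := by
        ring
    _ ≤ Wseq w xi (j+k) * ((j.factorial : ℝ) * (k.factorial : ℝ)) := by
        apply mul_le_mul_of_nonneg_right hmain (by positivity)
end
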